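/- arXiv:1012.1243 — 2 statements merged into one kernel-verified Lean document; each statement's English description precedes it below -/
import Mathlib

section
/- Rewriting of the weighted multinomial sum: for positive reals a_1,...,a_r, w_1,...,w_r and natural n, ∑_{n_1+···+n_r=n} (n!/(n_1!···n_r!)) ∏_{j=1}^r w_j^{n_j}(a_j)_{n_j} = (a_r)_n w_r^n · ∑_{n_1+···+n_{r-1} ≤ n} [(-n)_m / (1-a_r-n)_m] ∏_{j=1}^{r-1} ((a_j)_{n_j}/n_j!) (w_j/w_r)^{n_j}, where m = n_1+···+n_{r-1}. -/
/-!
Split off the last index: a tuple `(n₁, …, n_r)` summing to `n` is a tuple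
`(n₁, …, n_{r-1})` with sum `m ≤ n`, completed by `n_r = n - m`. Termwise, the multinomial
coefficient and `w_r ^ (n - m) (a_r)_{n-m}` are then rewritten through
`(a)_n = (a)_{n-m} (a + n - m)_m`, `(-n)_m = (-1)^m n!/(n-m)!` and
`(1 - a - n)_m = (-1)^m (a + n - m)_m`.
-/

open Finset Polynomial

theorem Finset.Nat.sum_antidiagonalTuple_succ_eq_sum_snoc {M : Type*} [AddCommMonoid M]
    (r n : ℕ) (φ : (Fin (r + 1) → ℕ) → M) :
    ∑ g ∈ antidiagonalTuple (r + 1) n, φ g =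
      ∑ f ∈ (Fintype.piFinset fun _ : Fin r => range (n + 1)).filter (fun f => ∑ j, f j ≤ n),
        φ (Fin.snoc f (n - ∑ j, f j)) := by
  symm
  refine sum_nbij' (fun f => Fin.snoc f (n - ∑ j, f j)) Fin.init ?_ ?_ ?_ ?_ fun _ _ => rfl
  · intro f hf
    rw [mem_filter] at hf
    rw [Nat.mem_antidiagonalTuple, Fin.sum_univ_castSucc]
    simp only [Fin.snoc_castSucc, Fin.snoc_last]
    omega
  · intro g hg
    rw [Nat.mem_antidiagonalTuple, Fin.sum_univ_castSucc] at hg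
    have hle : ∀ j : Fin r, g j.castSucc ≤ ∑ i : Fin r, g i.castSucc := fun j =>
      single_le_sum (fun i _ => Nat.zero_le (g (Fin.castSucc i))) (mem_univ j)
    simp only [mem_filter, Fintype.mem_piFinset, mem_range, Fin.init]
    exact ⟨fun j => by have := hle j; omega, by omega⟩
  · intro f _
    simp
  · intro g hg
    rw [Nat.mem_antidiagonalTuple, Fin.sum_univ_castSucc] at hg
    conv_rhs => rw [← Fin.snoc_init_self g]
    congr 1
    simp only [Fin.init]
    omega

theorem ascPochhammer_eval_sub_mul_eval_add {S : Type*} [CommSemiring S] (a : S) {m n : ℕ}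
    (h : m ≤ n) :
    (ascPochhammer S (n - m)).eval a * (ascPochhammer S m).eval (a + (n - m : ℕ)) =
      (ascPochhammer S n).eval a := by
  simpa [Nat.sub_add_cancel h, eval_comp] using
    congrArg (eval a) (ascPochhammer_mul S (n - m) m)

theorem ascPochhammer_eval_one_sub_sub {R : Type*} [CommRing R] (a : R) {m n : ℕ}
    (h : m ≤ n) :
    (ascPochhammer R m).eval (1 - a - n) =
      (-1) ^ m * (ascPochhammer R m).eval (a + (n - m : ℕ)) := by
  rw [show 1 - a - n = -(a + n - 1) by ring, ascPochhammer_eval_neg_eq_descPochhammer,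
    descPochhammer_eval_eq_ascPochhammer]
  push_cast [h]
  ring_nf

theorem ascPochhammer_eval_mul_neg_div_one_sub_sub {K : Type*} [Field K] [LinearOrder K]
    [IsStrictOrderedRing K] {a : K} (ha : 0 < a) {m n : ℕ} (h : m ≤ n) :
    (ascPochhammer K n).eval a *
        ((ascPochhammer K m).eval (-(n : K)) / (ascPochhammer K m).eval (1 - a - n)) =
      (ascPochhammer K (n - m)).eval a * n.descFactorial m := by
  have hpos : 0 < (ascPochhammer K m).eval (a + (n - m : ℕ)) :=
    ascPochhammer_pos _ _ (by positivity)
  rw [← ascPochhammer_eval_sub_mul_eval_add a h, ascPochhammer_eval_one_sub_sub a h,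
    ascPochhammer_eval_neg_eq_descPochhammer, descPochhammer_eval_eq_descFactorial]
  field_simp

theorem weighted_multinomial_rewrite (r n : ℕ)
    (a w : Fin (r + 1) → ℝ) (ha : ∀ j, 0 < a j) (hw : ∀ j, 0 < w j) :
    ∑ f ∈ Finset.Nat.antidiagonalTuple (r + 1) n,
        ((Nat.factorial n : ℝ) / ∏ j, (Nat.factorial (f j) : ℝ)) *
          ∏ j, w j ^ f j * (ascPochhammer ℝ (f j)).eval (a j) =
      (ascPochhammer ℝ n).eval (a (Fin.last r)) * w (Fin.last r) ^ n *
        ∑ f ∈ (Fintype.piFinset fun _ : Fin r => Finset.range (n + 1)).filter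
            (fun f => ∑ j, f j ≤ n),
          ((ascPochhammer ℝ (∑ j, f j)).eval (-(n : ℝ)) /
              (ascPochhammer ℝ (∑ j, f j)).eval (1 - a (Fin.last r) - (n : ℝ))) *
            ∏ j, ((ascPochhammer ℝ (f j)).eval (a j.castSucc) /
                (Nat.factorial (f j) : ℝ)) *
              (w j.castSucc / w (Fin.last r)) ^ f j := by
  rw [Finset.Nat.sum_antidiagonalTuple_succ_eq_sum_snoc, mul_sum]
  refine sum_congr rfl fun f hf => ?_
  set m := ∑ j, f j
  have hm : m ≤ n := (mem_filter.mp hf).2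
  have hfac : ((n - m).factorial : ℝ) * n.descFactorial m = n.factorial := by
    exact_mod_cast Nat.factorial_mul_descFactorial hm
  have hpow : w (Fin.last r) ^ (n - m) * w (Fin.last r) ^ m = w (Fin.last r) ^ n := by
    rw [← pow_add, Nat.sub_add_cancel hm]
  have hwr : w (Fin.last r) ≠ 0 := (hw _).ne'
  simp only [Fin.prod_univ_castSucc, Fin.snoc_castSucc, Fin.snoc_last]
  calc _ = (ascPochhammer ℝ (n - m)).eval (a (Fin.last r)) * n.descFactorial m *
        w (Fin.last r) ^ n * ∏ j, ((ascPochhammer ℝ (f j)).eval (a j.castSucc) /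
          (f j).factorial) * (w j.castSucc / w (Fin.last r)) ^ f j := by
        simp only [div_pow, prod_mul_distrib, prod_div_distrib, prod_pow_eq_pow_sum]
        rw [← hfac, ← hpow]
        field_simp
        ring
    _ = _ := by
        rw [← ascPochhammer_eval_mul_neg_div_one_sub_sub (ha _) hm]
        ring
end

section
/- Toscano's transformation for terminating Lauricella F_D polynomials: for natural n, reals b_1,...,b_r, c and x_1,...,x_r with appropriate nonvanishing Pochhammer denominators, ∑_{n_1+···+n_r ≤ n} (-n)_m (b_1)_{n_1}···(b_r)_{n_r}/(c)_m · ∏ x_j^{n_j}/n_j! = ((c-Σb_j)_n/(c)_n) · ∑_{n_1+···+n_r ≤ n} (-n)_m (b_1)_{n_1}···(b_r)_{n_r}/(1+Σb_j-n-c)_m · ∏ (1-x_j)^{n_j}/n_j!, where m = n_1+···+n_r. -/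
/-!
Write `xⱼ = (xⱼ - 1) + 1`, expand binomially and split `(bⱼ)_{mⱼ + tⱼ} = (bⱼ)_{mⱼ} (bⱼ + mⱼ)_{tⱼ}`.
Regrouped by the multi-index `m`, the sum over `t` collapses by the multinomial Vandermonde
identity `∑_{|t| = T} ∏ (βⱼ)_{tⱼ} / tⱼ! = (∑ βⱼ)_T / T!` to a terminating
`₂F₁(-(n - M), B + M; c + M; 1)` with `M = |m|`, `B = ∑ bⱼ`, which Chu–Vandermonde evaluates.
The reflection `(a)ₙ = (-1)ᴹ (a)_{n-M} (1 - a - n)_M` at `a = c - B` then turns the coefficient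
of `∏ (xⱼ - 1)^{mⱼ}` into the one on the right-hand side.
-/

open Finset

section Pochhammer

variable {R : Type*} [CommRing R]

open Polynomial

theorem ascPochhammer_add_eval (m k : ℕ) (a : R) :
    (ascPochhammer R (m + k)).eval a =
      (ascPochhammer R m).eval a * (ascPochhammer R k).eval (a + m) := by
  rw [← ascPochhammer_mul, eval_mul, eval_comp]
  simp

theorem ascPochhammer_eval_ne_zero_of_le {k n : ℕ} (hkn : k ≤ n) {a : R}
    (h : (ascPochhammer R n).eval a ≠ 0) : (ascPochhammer R k).eval a ≠ 0 := by
  rw [← Nat.add_sub_cancel' hkn, ascPochhammer_add_eval] at h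
  exact left_ne_zero_of_mul h

theorem ascPochhammer_eval_reflect (k : ℕ) (a : R) :
    (ascPochhammer R k).eval a = (-1) ^ k * (ascPochhammer R k).eval (1 - a - k) := by
  rw [← neg_neg a, ascPochhammer_eval_neg_eq_descPochhammer, descPochhammer_eval_eq_ascPochhammer]
  ring_nf

theorem ascPochhammer_eval_split_reflect {M n : ℕ} (hM : M ≤ n) (a : R) :
    (ascPochhammer R n).eval a =
      (-1) ^ M * (ascPochhammer R (n - M)).eval a * (ascPochhammer R M).eval (1 - a - n) := by
  conv_lhs => rw [← Nat.sub_add_cancel hM, ascPochhammer_add_eval, ascPochhammer_eval_reflect M]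
  rw [Nat.cast_sub hM]
  ring_nf

theorem ascPochhammer_eval_neg_natCast (N k : ℕ) :
    (ascPochhammer R k).eval (-(N : R)) = (-1) ^ k * (k.factorial * N.choose k : ℕ) := by
  rw [ascPochhammer_eval_neg_eq_descPochhammer, descPochhammer_eval_eq_descFactorial,
    Nat.descFactorial_eq_factorial_mul_choose]

theorem descPochhammer_eval_add (k : ℕ) (a b : R) :
    (descPochhammer R k).eval (a + b) = ∑ p ∈ antidiagonal k,
      (k.choose p.1 : R) * ((descPochhammer R p.1).eval a * (descPochhammer R p.2).eval b) := by
  have hsmeval (j : ℕ) (u : R) : (descPochhammer ℤ j).smeval u = (descPochhammer R j).eval u := by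
    rw [← aeval_eq_smeval, aeval_def, eval₂_eq_eval_map, descPochhammer_map]
  simpa only [hsmeval] using Ring.descPochhammer_smeval_add k (Commute.all a b)

theorem ascPochhammer_eval_add (k : ℕ) (a b : R) :
    (ascPochhammer R k).eval (a + b) = ∑ p ∈ antidiagonal k,
      (k.choose p.1 : R) * ((ascPochhammer R p.1).eval a * (ascPochhammer R p.2).eval b) := by
  rw [← neg_neg (a + b), neg_add, ascPochhammer_eval_neg_eq_descPochhammer,
    descPochhammer_eval_add, mul_sum]
  refine sum_congr rfl fun p hp => ?_
  rw [← mem_antidiagonal.mp hp, ← neg_neg a, ← neg_neg b, ascPochhammer_eval_neg_eq_descPochhammer,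
    ascPochhammer_eval_neg_eq_descPochhammer, neg_neg, neg_neg]
  ring

theorem chu_vandermonde (N : ℕ) (a c : R) :
    ∑ k ∈ range (N + 1), (-1) ^ k * (N.choose k : R) * (ascPochhammer R k).eval a *
      (ascPochhammer R (N - k)).eval (c + k) = (ascPochhammer R N).eval (c - a) := by
  -- Vandermonde for falling factorials: `(-1)ᵏ (a)ₖ` and `(c + k)_{N-k}` are the falling
  -- factorials of `-a` and `c + N - 1`.
  have h := descPochhammer_eval_add N (-a) (c + N - 1)
  rw [Nat.sum_antidiagonal_eq_sum_range_succ (fun i j => (N.choose i : R) *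
    ((descPochhammer R i).eval (-a) * (descPochhammer R j).eval (c + N - 1))),
    descPochhammer_eval_eq_ascPochhammer] at h
  convert h.symm using 1
  · refine sum_congr rfl fun k hk => ?_
    have hkN : k ≤ N := Nat.lt_succ_iff.mp (mem_range.mp hk)
    rw [← neg_neg a, ascPochhammer_eval_neg_eq_descPochhammer, neg_neg,
      descPochhammer_eval_eq_ascPochhammer (r := c + N - 1), Nat.cast_sub hkN]
    ring_nf
    rw [pow_mul', neg_one_sq, one_pow, mul_one]
  · ring_nf

end Pochhammer

theorem sum_finsuppAntidiag_eq_sum_piAntidiag {ι μ M : Type*} [DecidableEq ι] [AddCommMonoid μ]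
    [HasAntidiagonal μ] [DecidableEq μ] [AddCommMonoid M] (s : Finset ι) (n : μ)
    (g : (ι → μ) → M) :
    ∑ l ∈ finsuppAntidiag s n, g l = ∑ f ∈ piAntidiag s n, g f := by
  rw [finsuppAntidiag, sum_map]
  exact sum_attach (piAntidiag s n) g

theorem sum_piAntidiag_sum_piFinset_antidiagonal {ι M : Type*} [Fintype ι] [DecidableEq ι]
    [AddCommMonoid M] (s : ℕ) (F : (ι → ℕ × ℕ) → M) :
    ∑ f ∈ piAntidiag univ s, ∑ g ∈ Fintype.piFinset fun j => antidiagonal (f j), F g =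
      ∑ p ∈ antidiagonal s, ∑ m ∈ piAntidiag univ p.1, ∑ t ∈ piAntidiag univ p.2,
        F fun j => (m j, t j) := by
  simp_rw [← sum_product', sum_sigma']
  refine sum_nbij'
    (fun x => ⟨(∑ j, (x.2 j).1, ∑ j, (x.2 j).2), (fun j => (x.2 j).1, fun j => (x.2 j).2)⟩)
    (fun y => ⟨y.2.1 + y.2.2, fun j => (y.2.1 j, y.2.2 j)⟩) ?_ ?_ ?_ ?_ ?_ <;>
  simp only [mem_sigma, mem_piAntidiag, Fintype.mem_piFinset, HasAntidiagonal.mem_antidiagonal,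
    mem_product, mem_univ, implies_true, and_true, Sigma.forall, Prod.forall, Pi.add_apply]
  · rintro f g ⟨hf, hg⟩
    rw [← sum_add_distrib, ← hf]
    exact sum_congr rfl fun j _ => hg j
  · rintro M T m t ⟨hMT, hm, ht⟩
    rwa [sum_add_distrib, hm, ht]
  · rintro f g ⟨-, hg⟩
    obtain rfl : f = fun j => (g j).1 + (g j).2 := funext fun j => (hg j).symm
    rfl
  · rintro M T m t ⟨-, hm, ht⟩
    subst hm ht
    rfl

theorem sum_filter_piFinset_eq_sum_range_sum_piAntidiag {ι M : Type*} [Fintype ι]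
    [DecidableEq ι] [AddCommMonoid M] (n : ℕ) (F : (ι → ℕ) → M) :
    ∑ f ∈ (Fintype.piFinset fun _ : ι => range (n + 1)).filter (fun f => ∑ j, f j ≤ n), F f =
      ∑ s ∈ range (n + 1), ∑ f ∈ piAntidiag univ s, F f := by
  rw [← sum_fiberwise_of_maps_to (g := fun f : ι → ℕ => ∑ j, f j) (t := range (n + 1))
    fun f hf => mem_range.mpr (Nat.lt_succ_of_le (mem_filter.mp hf).2)]
  refine sum_congr rfl fun s hs => sum_congr (ext fun f => ?_) fun _ _ => rfl
  simp only [mem_filter, Fintype.mem_piFinset, mem_range, mem_piAntidiag, mem_univ,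
    implies_true, and_true]
  constructor
  · exact fun h => h.2
  · rintro rfl
    have hs : ∑ j, f j ≤ n := Nat.lt_succ_iff.mp (mem_range.mp hs)
    exact ⟨⟨fun j => Nat.lt_succ_of_le
      ((single_le_sum (fun i _ => Nat.zero_le (f i)) (mem_univ j)).trans hs), hs⟩, rfl⟩

theorem sum_range_sum_antidiagonal {M : Type*} [AddCommMonoid M] (n : ℕ) (F : ℕ → ℕ → M) :
    ∑ s ∈ range (n + 1), ∑ p ∈ antidiagonal s, F p.1 p.2 =
      ∑ i ∈ range (n + 1), ∑ j ∈ range (n + 1 - i), F i j := by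
  simp_rw [Nat.sum_antidiagonal_eq_sum_range_succ F]
  exact sum_range_diag_flip (n + 1) F

section Field

variable {K : Type*} [Field K] [CharZero K]

open PowerSeries

/-- The binomial series `(1 - X)^(-a)`. -/
noncomputable def ascPochhammerEGF (a : K) : PowerSeries K :=
  mk fun k => (ascPochhammer K k).eval a / k.factorial

theorem ascPochhammerEGF_zero : ascPochhammerEGF (0 : K) = 1 := by
  ext k
  rw [ascPochhammerEGF, coeff_mk, ascPochhammer_eval_zero, coeff_one]
  split_ifs <;> simp_all

theorem ascPochhammerEGF_add (a b : K) :
    ascPochhammerEGF (a + b) = ascPochhammerEGF a * ascPochhammerEGF b := by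
  ext k
  simp only [ascPochhammerEGF, coeff_mul, coeff_mk, ascPochhammer_eval_add, sum_div]
  refine sum_congr rfl fun p hp => ?_
  obtain rfl := mem_antidiagonal.mp hp
  rw [Nat.cast_add_choose]
  field_simp [Nat.factorial_ne_zero]

theorem prod_ascPochhammerEGF {ι : Type*} (s : Finset ι) (β : ι → K) :
    ∏ i ∈ s, ascPochhammerEGF (β i) = ascPochhammerEGF (∑ i ∈ s, β i) := by
  induction s using Finset.cons_induction with
  | empty => simp [ascPochhammerEGF_zero]
  | cons i s hi ih => rw [prod_cons, sum_cons, ih, ascPochhammerEGF_add]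

theorem sum_piAntidiag_prod_ascPochhammer_div {ι : Type*} [DecidableEq ι] (s : Finset ι)
    (β : ι → K) (k : ℕ) :
    ∑ f ∈ piAntidiag s k, ∏ i ∈ s, (ascPochhammer K (f i)).eval (β i) / (f i).factorial =
      (ascPochhammer K k).eval (∑ i ∈ s, β i) / k.factorial := by
  have h := congrArg (coeff k) (prod_ascPochhammerEGF s β)
  simp only [coeff_prod, ascPochhammerEGF, coeff_mk] at h
  rwa [sum_finsuppAntidiag_eq_sum_piAntidiag s k
    (fun f => ∏ i ∈ s, (ascPochhammer K (f i)).eval (β i) / (f i).factorial)] at h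

theorem ascPochhammer_eval_mul_pow_div_factorial (k : ℕ) (b y : K) :
    (ascPochhammer K k).eval b * y ^ k / k.factorial = ∑ p ∈ antidiagonal k,
      (ascPochhammer K p.1).eval b * (y - 1) ^ p.1 / p.1.factorial *
        ((ascPochhammer K p.2).eval (b + p.1) / p.2.factorial) := by
  rw [← sub_add_cancel y 1, (Commute.all (y - 1) 1).add_pow', mul_sum, sum_div]
  refine sum_congr rfl fun p hp => ?_
  obtain rfl := mem_antidiagonal.mp hp
  rw [ascPochhammer_add_eval, sub_add_cancel, one_pow, mul_one, nsmul_eq_mul, Nat.cast_add_choose]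
  field_simp [Nat.factorial_ne_zero]

theorem chu_vandermonde_shift {M n : ℕ} (hM : M ≤ n) (a c : K)
    (hc : (ascPochhammer K n).eval c ≠ 0) :
    ∑ T ∈ range (n + 1 - M), (ascPochhammer K (M + T)).eval (-(n : K)) /
        (ascPochhammer K (M + T)).eval c * ((ascPochhammer K T).eval (a + M) / T.factorial) =
      (ascPochhammer K M).eval (-(n : K)) * (ascPochhammer K (n - M)).eval (c - a) /
        (ascPochhammer K n).eval c := by
  rw [eq_div_iff hc, sum_mul, show c - a = c + M - (a + M) by ring,
    ← chu_vandermonde (n - M) (a + M) (c + M), mul_sum, Nat.sub_add_comm hM]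
  refine sum_congr rfl fun T hT => ?_
  have hT : T ≤ n - M := Nat.lt_succ_iff.mp (mem_range.mp hT)
  have hsplit : (ascPochhammer K n).eval c =
      (ascPochhammer K (M + T)).eval c * (ascPochhammer K (n - M - T)).eval (c + M + T) := by
    rw [add_assoc, ← Nat.cast_add, ← ascPochhammer_add_eval]
    congr 2
    omega
  have hMT : (ascPochhammer K (M + T)).eval c ≠ 0 := left_ne_zero_of_mul (hsplit ▸ hc)
  have hneg : -(n : K) + M = -((n - M : ℕ) : K) := by
    rw [Nat.cast_sub hM]
    ring
  rw [ascPochhammer_add_eval, hneg, ascPochhammer_eval_neg_natCast (n - M) T, hsplit]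
  field_simp [Nat.factorial_ne_zero]
  push_cast
  ring

section Lauricella

variable {ι : Type*} [Fintype ι] [DecidableEq ι]

/-- The coefficient of `tˢ` in `∏ⱼ (1 - xⱼ t)^(-bⱼ)`, i.e. the degree-`s` part of the Lauricella
series `F_D`. -/
noncomputable def lauricellaComponent (b x : ι → K) (s : ℕ) : K :=
  ∑ f ∈ piAntidiag univ s, ∏ j, (ascPochhammer K (f j)).eval (b j) * x j ^ f j / (f j).factorial

/-- The terminating Lauricella polynomial `F_D[-n, b₁, …, bᵣ; c; x₁, …, xᵣ]`. -/
noncomputable def lauricellaFD (n : ℕ) (b : ι → K) (c : K) (x : ι → K) : K :=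
  ∑ s ∈ range (n + 1), (ascPochhammer K s).eval (-(n : K)) / (ascPochhammer K s).eval c *
    lauricellaComponent b x s

theorem lauricellaComponent_neg (b y : ι → K) (s : ℕ) :
    lauricellaComponent b (-y) s = (-1) ^ s * lauricellaComponent b y s := by
  rw [lauricellaComponent, lauricellaComponent, mul_sum]
  refine sum_congr rfl fun f hf => ?_
  rw [← (mem_piAntidiag.mp hf).1, ← prod_pow_eq_pow_sum, ← prod_mul_distrib]
  refine prod_congr rfl fun j _ => ?_
  rw [Pi.neg_apply, neg_pow]
  ring

theorem lauricellaComponent_eq_sum (b x : ι → K) (s : ℕ) :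
    lauricellaComponent b x s = ∑ p ∈ antidiagonal s,
      (ascPochhammer K p.2).eval (∑ j, b j + p.1) / p.2.factorial *
        lauricellaComponent b (x - 1) p.1 := by
  conv_lhs =>
    rw [lauricellaComponent]
    enter [2, f, 2, j]
    rw [ascPochhammer_eval_mul_pow_div_factorial]
  simp_rw [prod_univ_sum, sum_piAntidiag_sum_piFinset_antidiagonal, lauricellaComponent, mul_sum]
  refine sum_congr rfl fun p _ => sum_congr rfl fun m hm => ?_
  rw [← (mem_piAntidiag.mp hm).1]
  simp_rw [prod_mul_distrib]
  rw [← mul_sum, sum_piAntidiag_prod_ascPochhammer_div, sum_add_distrib, Nat.cast_sum, mul_comm]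
  rfl

theorem lauricellaFD_transformation (n : ℕ) (b x : ι → K) (c : K)
    (hc : (ascPochhammer K n).eval c ≠ 0)
    (hd : (ascPochhammer K n).eval (1 + ∑ j, b j - n - c) ≠ 0) :
    lauricellaFD n b c x = (ascPochhammer K n).eval (c - ∑ j, b j) / (ascPochhammer K n).eval c *
      lauricellaFD n b (1 + ∑ j, b j - n - c) (1 - x) := by
  set B := ∑ j, b j
  let F (M T : ℕ) : K := (ascPochhammer K (M + T)).eval (-(n : K)) /
    (ascPochhammer K (M + T)).eval c *
      ((ascPochhammer K T).eval (B + M) / T.factorial * lauricellaComponent b (x - 1) M)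
  have hcoeff : ∀ M ∈ range (n + 1), ∑ T ∈ range (n + 1 - M), F M T =
      (ascPochhammer K n).eval (c - B) / (ascPochhammer K n).eval c *
        ((ascPochhammer K M).eval (-(n : K)) / (ascPochhammer K M).eval (1 + B - n - c) *
          lauricellaComponent b (1 - x) M) := by
    intro M hM
    have hMn : M ≤ n := Nat.lt_succ_iff.mp (mem_range.mp hM)
    have hdM := ascPochhammer_eval_ne_zero_of_le hMn hd
    simp_rw [F, ← mul_assoc]
    rw [← sum_mul, chu_vandermonde_shift hMn B c hc,
      ascPochhammer_eval_split_reflect hMn (c - B), show x - 1 = -(1 - x) by ring,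
      lauricellaComponent_neg, show 1 - (c - B) - n = 1 + B - n - c by ring]
    field_simp
  calc lauricellaFD n b c x
      = ∑ s ∈ range (n + 1), ∑ p ∈ antidiagonal s, F p.1 p.2 := by
        refine sum_congr rfl fun s _ => ?_
        rw [lauricellaComponent_eq_sum, mul_sum]
        refine sum_congr rfl fun p hp => ?_
        rw [← mem_antidiagonal.mp hp]
    _ = ∑ M ∈ range (n + 1), ∑ T ∈ range (n + 1 - M), F M T := sum_range_sum_antidiagonal n F
    _ = _ := by rw [lauricellaFD, mul_sum]; exact sum_congr rfl hcoeff

theorem sum_filter_piFinset_eq_lauricellaFD (n : ℕ) (b x : ι → K) (c : K) :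
    ∑ f ∈ (Fintype.piFinset fun _ : ι => range (n + 1)).filter (fun f => ∑ j, f j ≤ n),
        ((ascPochhammer K (∑ j, f j)).eval (-(n : K)) * ∏ j, (ascPochhammer K (f j)).eval (b j)) /
          (ascPochhammer K (∑ j, f j)).eval c * ∏ j, x j ^ f j / ((f j).factorial : K) =
      lauricellaFD n b c x := by
  rw [sum_filter_piFinset_eq_sum_range_sum_piAntidiag, lauricellaFD]
  refine sum_congr rfl fun s _ => ?_
  rw [lauricellaComponent, mul_sum]
  refine sum_congr rfl fun f hf => ?_
  simp_rw [(mem_piAntidiag.mp hf).1, mul_div_assoc, prod_mul_distrib]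
  ring

end Lauricella

end Field

theorem toscano_lauricella_transformation (r n : ℕ) (b x : Fin r → ℝ) (c : ℝ)
    (hc : ∀ k ≤ n, (ascPochhammer ℝ k).eval c ≠ 0)
    (hd : ∀ k ≤ n, (ascPochhammer ℝ k).eval (1 + (∑ j, b j) - (n : ℝ) - c) ≠ 0) :
    ∑ f ∈ (Fintype.piFinset fun _ : Fin r => Finset.range (n + 1)).filter
        (fun f => ∑ j, f j ≤ n),
        ((ascPochhammer ℝ (∑ j, f j)).eval (-(n : ℝ)) *
            ∏ j, (ascPochhammer ℝ (f j)).eval (b j)) /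
          (ascPochhammer ℝ (∑ j, f j)).eval c *
          ∏ j, x j ^ f j / (Nat.factorial (f j) : ℝ) =
      ((ascPochhammer ℝ n).eval (c - ∑ j, b j) / (ascPochhammer ℝ n).eval c) *
        ∑ f ∈ (Fintype.piFinset fun _ : Fin r => Finset.range (n + 1)).filter
            (fun f => ∑ j, f j ≤ n),
          ((ascPochhammer ℝ (∑ j, f j)).eval (-(n : ℝ)) *
              ∏ j, (ascPochhammer ℝ (f j)).eval (b j)) /
            (ascPochhammer ℝ (∑ j, f j)).eval (1 + (∑ j, b j) - (n : ℝ) - c) *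
            ∏ j, (1 - x j) ^ f j / (Nat.factorial (f j) : ℝ) := by
  have h := lauricellaFD_transformation n b x c (hc n le_rfl) (hd n le_rfl)
  rwa [← sum_filter_piFinset_eq_lauricellaFD, ← sum_filter_piFinset_eq_lauricellaFD] at h
end
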